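/- (Correctness of Π without left recursion) Given a PEG G, a parsing expression p, and a subject xy: if G[p] xy ⇝ (y, x') in the original PEG semantics, then the parsing machine executing the compiled program Π(G, i, p) from state ⟨pc, xy, e⟩, where pc is the address of the first instruction of Π(G, i, p), reaches state ⟨pc + |Π(G, i, p)|, y, e⟩; and if G[p] xy ⇝ fail, then the machine executing Π(G, i, p) from ⟨pc, xy, e⟩ reaches the failure state Fail⟨e⟩. -/

import Mathlib

/-- Parsing expressions over non-terminals `N` and terminals `T`. -/
inductive PExp (N T : Type) : Type where
  | empty : PExp N T
  | term : T → PExp N T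
  | var : N → PExp N T
  | seq : PExp N T → PExp N T → PExp N T
  | choice : PExp N T → PExp N T → PExp N T
  | star : PExp N T → PExp N T
  | nott : PExp N T → PExp N T

/-- A PEG: a rule for every non-terminal and a starting expression.
(A PEG whose `prod` is a total function is a closed PEG.) -/
structure PEG (N T : Type) where
  prod : N → PExp N T
  start : PExp N T

/-- Symbols of parse strings: terminals and tagged brackets `A[...]`. -/
inductive PSym (N T : Type) : Type where
  | t : T → PSym N T
  | node : N → List (PSym N T) → PSym N T

/-- Parse strings. -/
abbrev PStr (N T : Type) := List (PSym N T)

/-- Result of a match: `fail`, or a pair (remaining suffix, parse string). -/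
inductive Res (N T : Type) : Type where
  | fail : Res N T
  | ok : List T → PStr N T → Res N T
/-- The original PEG semantics `G[p] s ⇝ r`. -/
inductive Match {N T : Type} (G : PEG N T) : PExp N T → List T → Res N T → Prop where
  | empty1 : Match G .empty s (.ok s [])
  | char1 : Match G (.term a) (a :: s) (.ok s [.t a])
  | char2 : b ≠ a → Match G (.term b) (a :: s) .fail
  | char3 : Match G (.term a) [] .fail
  | var1 : Match G (G.prod A) s (.ok s1 t) → Match G (.var A) s (.ok s1 [.node A t])
  | var2 : Match G (G.prod A) s .fail → Match G (.var A) s .fail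
  | con1 : Match G p1 s (.ok s1 t1) → Match G p2 s1 (.ok s2 t2) →
      Match G (.seq p1 p2) s (.ok s2 (t1 ++ t2))
  | con2 : Match G p1 s (.ok s1 t1) → Match G p2 s1 .fail → Match G (.seq p1 p2) s .fail
  | con3 : Match G p1 s .fail → Match G (.seq p1 p2) s .fail
  | ord1 : Match G p1 s (.ok s1 t1) → Match G (.choice p1 p2) s (.ok s1 t1)
  | ord2 : Match G p1 s .fail → Match G p2 s .fail → Match G (.choice p1 p2) s .fail
  | ord3 : Match G p1 s .fail → Match G p2 s (.ok s1 t1) → Match G (.choice p1 p2) s (.ok s1 t1)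
  | not1 : Match G p s .fail → Match G (.nott p) s (.ok s [])
  | not2 : Match G p s (.ok s1 t1) → Match G (.nott p) s .fail
  | rep1 : Match G p s .fail → Match G (.star p) s (.ok s [])
  | rep2 : Match G p s (.ok s1 t1) → Match G (.star p) s1 (.ok s2 t2) →
      Match G (.star p) s (.ok s2 (t1 ++ t2))
/-- Instructions of the parsing machine; jump arguments are relative offsets. -/
inductive Instr (T : Type) : Type where
  | char : T → Instr T
  | any : Instr T
  | choice : ℤ → Instr T
  | jump : ℤ → Instr T
  | call : ℤ → Instr T
  | ret : Instr T
  | commit : ℤ → Instr T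
  | fail : Instr T

/-- Stack entries: call frames and backtrack frames. -/
inductive Frame (T : Type) : Type where
  | ret : ℕ → Frame T
  | back : ℕ → List T → Frame T

/-- Machine states: `⟨pc, s, e⟩` or `Fail⟨e⟩`. -/
inductive MState (T : Type) : Type where
  | st : ℕ → List T → List (Frame T) → MState T
  | fail : List (Frame T) → MState T

/-- The address `pc + l` for a relative offset `l`. -/
def nxt (pc : ℕ) (l : ℤ) : ℕ := ((pc : ℤ) + l).toNat

/-- One step of the parsing machine over the (implicit) program `prog`. -/
inductive Step {T : Type} (prog : List (Instr T)) : MState T → MState T → Prop where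
  | char_ok : prog[pc]? = some (.char a) →
      Step prog (.st pc (a :: s) e) (.st (pc + 1) s e)
  | char_fail : prog[pc]? = some (.char a) → b ≠ a →
      Step prog (.st pc (b :: s) e) (.fail e)
  | char_eps : prog[pc]? = some (.char a) →
      Step prog (.st pc [] e) (.fail e)
  | any_ok : prog[pc]? = some .any →
      Step prog (.st pc (a :: s) e) (.st (pc + 1) s e)
  | any_eps : prog[pc]? = some .any →
      Step prog (.st pc [] e) (.fail e)
  | choice : prog[pc]? = some (.choice i) →
      Step prog (.st pc s e) (.st (pc + 1) s (.back (nxt pc i) s :: e))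
  | jump : prog[pc]? = some (.jump l) →
      Step prog (.st pc s e) (.st (nxt pc l) s e)
  | call : prog[pc]? = some (.call l) →
      Step prog (.st pc s e) (.st (nxt pc l) s (.ret (pc + 1) :: e))
  | ret : prog[pc]? = some .ret →
      Step prog (.st pc s (.ret pc2 :: e)) (.st pc2 s e)
  | commit : prog[pc]? = some (.commit l) →
      Step prog (.st pc s (h :: e)) (.st (nxt pc l) s e)
  | fail_i : prog[pc]? = some .fail →
      Step prog (.st pc s e) (.fail e)
  | unwind_ret : Step prog (.fail (.ret pc :: e)) (.fail e)
  | unwind_back : Step prog (.fail (.back pc s :: e)) (.st pc s e)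

/-- Zero or more machine steps. -/
abbrev Steps {T : Type} (prog : List (Instr T)) : MState T → MState T → Prop :=
  Relation.ReflTransGen (Step prog)

/-- `Π(G, i, p)`: compilation of the parsing expression `p` starting at
position `i`, where `addr A` is the starting address of the compiled
production of the non-terminal `A`. -/
def compile {N T : Type} (addr : N → ℕ) : PExp N T → ℕ → List (Instr T)
  | .empty, _ => []
  | .term a, _ => [.char a]
  | .var A, i => [.call ((addr A : ℤ) - (i : ℤ))]
  | .seq p1 p2, i =>
      let c1 := compile addr p1 i
      c1 ++ compile addr p2 (i + c1.length)
  | .choice p1 p2, i =>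
      let c1 := compile addr p1 (i + 1)
      let c2 := compile addr p2 (i + c1.length + 2)
      .choice ((c1.length : ℤ) + 2) :: (c1 ++ (.commit ((c2.length : ℤ) + 1) :: c2))
  | .star p, i =>
      let c := compile addr p (i + 1)
      .choice ((c.length : ℤ) + 2) :: (c ++ [.commit (-((c.length : ℤ) + 1))])
  | .nott p, i =>
      let c := compile addr p (i + 1)
      .choice ((c.length : ℤ) + 3) :: (c ++ [.commit 1, .fail])

/-- `code` is the segment of `prog` starting at address `i`. -/
def SegAt {T : Type} (prog : List (Instr T)) (i : ℕ) (code : List (Instr T)) : Prop :=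
  ∃ pre post, prog = pre ++ code ++ post ∧ pre.length = i

/-! The compiled code of a parsing expression behaves as a fragment with one entry, its first
instruction, and two exits: on success the machine arrives just past the fragment with the
stack it entered with, on failure it reaches `Fail⟨e⟩` for that entry stack `e`. Each compiled
pattern only brackets its subfragments with a backtrack frame (`Choice`/`Commit`) or a call frame
(`Call`/`Return`), which the exits of the subfragments leave on top of the stack for the pattern
to pop, so this invariant (`Executes`) is preserved by every rule of the semantics, and the
theorem follows by induction on the derivation of the match. -/

variable {N T : Type}

namespace SegAt

variable {prog c c₁ c₂ : List (Instr T)} {i : ℕ} {x : Instr T}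

lemma append_left (h : SegAt prog i (c₁ ++ c₂)) : SegAt prog i c₁ := by
  obtain ⟨pre, post, rfl, rfl⟩ := h
  exact ⟨pre, c₂ ++ post, by simp, rfl⟩

lemma append_right (h : SegAt prog i (c₁ ++ c₂)) : SegAt prog (i + c₁.length) c₂ := by
  obtain ⟨pre, post, rfl, rfl⟩ := h
  exact ⟨pre ++ c₁, post, by simp, by simp⟩

lemma getElem?_eq (h : SegAt prog i (x :: c)) : prog[i]? = some x := by
  obtain ⟨pre, post, rfl, rfl⟩ := h
  simp

lemma tail (h : SegAt prog i (x :: c)) : SegAt prog (i + 1) c :=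
  append_right (c₁ := [x]) h

end SegAt

lemma nxt_eq {pc n : ℕ} {l : ℤ} (h : (pc : ℤ) + l = n) : nxt pc l = n := by
  simp [nxt, h]

namespace Steps

variable {prog : List (Instr T)} {a i j : ℕ} {k l : ℤ} {s s₁ : List T} {e : List (Frame T)}

lemma choice_backtrack (hch : prog[i]? = some (.choice k)) (hk : nxt i k = a)
    (h : Steps prog (.st (i + 1) s (.back (nxt i k) s :: e)) (.fail (.back (nxt i k) s :: e))) :
    Steps prog (.st i s e) (.st a s e) :=
  .head (.choice hch) (hk ▸ h.tail .unwind_back)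

lemma choice_commit (hch : prog[i]? = some (.choice k))
    (h : Steps prog (.st (i + 1) s (.back (nxt i k) s :: e)) (.st j s₁ (.back (nxt i k) s :: e)))
    (hcm : prog[j]? = some (.commit l)) (hl : nxt j l = a) :
    Steps prog (.st i s e) (.st a s₁ e) :=
  .head (.choice hch) (hl ▸ h.tail (.commit hcm))

lemma call_ret (hc : prog[i]? = some (.call l)) (hl : nxt i l = a)
    (h : Steps prog (.st a s (.ret (i + 1) :: e)) (.st j s₁ (.ret (i + 1) :: e)))
    (hr : prog[j]? = some .ret) :
    Steps prog (.st i s e) (.st (i + 1) s₁ e) :=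
  .head (.call hc) (hl ▸ h.tail (.ret hr))

lemma call_fail (hc : prog[i]? = some (.call l)) (hl : nxt i l = a)
    (h : Steps prog (.st a s (.ret (i + 1) :: e)) (.fail (.ret (i + 1) :: e))) :
    Steps prog (.st i s e) (.fail e) :=
  .head (.call hc) (hl ▸ h.tail .unwind_ret)

end Steps

def Res.rest? : Res N T → Option (List T)
  | .ok s _ => some s
  | .fail => none

def MState.exit (pc : ℕ) (e : List (Frame T)) : Option (List T) → MState T
  | some s => .st pc s e
  | none => .fail e

def Executes (addr : N → ℕ) (prog : List (Instr T)) (p : PExp N T) (s : List T)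
    (o : Option (List T)) : Prop :=
  ∀ i e, SegAt prog i (compile addr p i) →
    Steps prog (.st i s e) (MState.exit (i + (compile addr p i).length) e o)

namespace Executes

variable {addr : N → ℕ} {prog : List (Instr T)} {p p₁ p₂ : PExp N T} {s s₁ : List T}
  {o : Option (List T)}

lemma empty : Executes addr prog (.empty : PExp N T) s (some s) :=
  fun _ _ _ => .refl

lemma term_ok {a : T} : Executes addr prog (.term a : PExp N T) (a :: s) (some s) :=
  fun _ _ hp => .single (.char_ok hp.getElem?_eq)

lemma term_fail {b : T} (h : s.head? ≠ some b) :
    Executes addr prog (.term b : PExp N T) s none := by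
  intro i e hp
  cases s with
  | nil => exact .single (.char_eps hp.getElem?_eq)
  | cons a s => exact .single (.char_fail hp.getElem?_eq (by simpa using h))

lemma var {G : PEG N T} {A : N}
    (hA : SegAt prog (addr A) (compile addr (G.prod A) (addr A) ++ [Instr.ret]))
    (h : Executes addr prog (G.prod A) s o) : Executes addr prog (.var A) s o := by
  intro i e hp
  have hcall : prog[i]? = some (.call ((addr A : ℤ) - i)) := hp.getElem?_eq
  have hbody := h (addr A) (.ret (i + 1) :: e) hA.append_left
  have hnxt : nxt i ((addr A : ℤ) - i) = addr A := nxt_eq (by omega)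
  cases o with
  | none => exact Steps.call_fail hcall hnxt hbody
  | some s₁ => exact Steps.call_ret hcall hnxt hbody hA.append_right.getElem?_eq

lemma seq_ok (h₁ : Executes addr prog p₁ s (some s₁))
    (h₂ : Executes addr prog p₂ s₁ o) :
    Executes addr prog (.seq p₁ p₂) s o := by
  intro i e hp
  dsimp only [compile] at hp ⊢
  rw [List.length_append, ← Nat.add_assoc]
  exact (h₁ i e hp.append_left).trans (h₂ _ e hp.append_right)

lemma seq_fail (h₁ : Executes addr prog p₁ s none) :
    Executes addr prog (.seq p₁ p₂) s none :=
  fun i e hp => h₁ i e hp.append_left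

lemma choice_left (h₁ : Executes addr prog p₁ s (some s₁)) :
    Executes addr prog (.choice p₁ p₂) s (some s₁) := by
  intro i e hp
  dsimp only [compile] at hp ⊢
  exact Steps.choice_commit hp.getElem?_eq (h₁ _ _ hp.tail.append_left)
    hp.tail.append_right.getElem?_eq
    (nxt_eq (by simp only [List.length_cons, List.length_append]; omega))

lemma choice_right (h₁ : Executes addr prog p₁ s none) (h₂ : Executes addr prog p₂ s o) :
    Executes addr prog (.choice p₁ p₂) s o := by
  intro i e hp
  dsimp only [compile] at hp ⊢
  have hc₂ := hp.tail.append_right.tail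
  rw [show i + 1 + (compile addr p₁ (i + 1)).length + 1
    = i + (compile addr p₁ (i + 1)).length + 2 by omega] at hc₂
  convert (Steps.choice_backtrack hp.getElem?_eq (nxt_eq (by omega))
    (h₁ _ _ hp.tail.append_left)).trans (h₂ _ e hc₂) using 2
  simp only [List.length_cons, List.length_append]
  omega

lemma star_stop (h : Executes addr prog p s none) : Executes addr prog (.star p) s (some s) := by
  intro i e hp
  dsimp only [compile] at hp ⊢
  exact Steps.choice_backtrack hp.getElem?_eq
    (nxt_eq (by simp only [List.length_cons, List.length_append, List.length_nil]; omega))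
    (h _ _ hp.tail.append_left)

lemma star_iter (h₁ : Executes addr prog p s (some s₁))
    (h₂ : Executes addr prog (.star p) s₁ o) :
    Executes addr prog (.star p) s o := by
  intro i e hp
  refine .trans ?_ (h₂ i e hp)
  dsimp only [compile] at hp
  exact Steps.choice_commit hp.getElem?_eq (h₁ _ _ hp.tail.append_left)
    hp.tail.append_right.getElem?_eq (nxt_eq (by omega))

lemma not_ok (h : Executes addr prog p s none) : Executes addr prog (.nott p) s (some s) := by
  intro i e hp
  dsimp only [compile] at hp ⊢
  exact Steps.choice_backtrack hp.getElem?_eq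
    (nxt_eq (by simp only [List.length_cons, List.length_append, List.length_nil]; omega))
    (h _ _ hp.tail.append_left)

lemma not_fail (h : Executes addr prog p s (some s₁)) : Executes addr prog (.nott p) s none := by
  intro i e hp
  dsimp only [compile] at hp
  exact (Steps.choice_commit hp.getElem?_eq (h _ _ hp.tail.append_left)
    hp.tail.append_right.getElem?_eq (nxt_eq rfl)).tail
    (.fail_i hp.tail.append_right.tail.getElem?_eq)

end Executes

theorem Match.executes {G : PEG N T} {addr : N → ℕ} {prog : List (Instr T)}
    (hgram : ∀ A : N, SegAt prog (addr A) (compile addr (G.prod A) (addr A) ++ [Instr.ret]))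
    {p : PExp N T} {s : List T} {r : Res N T} (h : Match G p s r) :
    Executes addr prog p s r.rest? := by
  induction h with
  | empty1 => exact .empty
  | char1 => exact .term_ok
  | char2 hne => exact .term_fail (by simpa using hne.symm)
  | char3 => exact .term_fail (by simp)
  | var1 _ ih | var2 _ ih => exact .var (hgram _) ih
  | con1 _ _ ih₁ ih₂ | con2 _ _ ih₁ ih₂ => exact ih₁.seq_ok ih₂
  | con3 _ ih₁ => exact ih₁.seq_fail
  | ord1 _ ih₁ => exact ih₁.choice_left
  | ord2 _ _ ih₁ ih₂ | ord3 _ _ ih₁ ih₂ => exact ih₁.choice_right ih₂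
  | not1 _ ih => exact ih.not_ok
  | not2 _ ih => exact ih.not_fail
  | rep1 _ ih => exact ih.star_stop
  | rep2 _ _ ih₁ ih₂ => exact ih₁.star_iter ih₂

/-- Correctness of `Π` without left recursion: if the compiled productions of
`G` and the compiled program `Π(G, i, p)` sit inside `prog` (at the addresses
given by `addr` and at `i`, respectively), then a successful match
`G[p] xy ⇝ (y, x')` makes the machine go from `⟨i, xy, e⟩` to
`⟨i + |Π(G, i, p)|, y, e⟩`, and a failing match `G[p] xy ⇝ fail` makes it go
from `⟨i, xy, e⟩` to `Fail⟨e⟩`. -/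
theorem machine_correct {N T : Type} (G : PEG N T) (addr : N → ℕ)
    (prog : List (Instr T))
    (hgram : ∀ A : N, SegAt prog (addr A)
      (compile addr (G.prod A) (addr A) ++ [Instr.ret]))
    (p : PExp N T) (i : ℕ) (hp : SegAt prog i (compile addr p i))
    (x y : List T) (e : List (Frame T)) :
    (∀ x' : PStr N T, Match G p (x ++ y) (Res.ok y x') →
      Steps prog (MState.st i (x ++ y) e)
        (MState.st (i + (compile addr p i).length) y e)) ∧
    (Match G p (x ++ y) Res.fail →
      Steps prog (MState.st i (x ++ y) e) (MState.fail e)) :=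
  ⟨fun _ hm => (hm.executes hgram) i e hp, fun hm => (hm.executes hgram) i e hp⟩
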